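/- arXiv:1206.2678 — 3 statements merged into one kernel-verified Lean document; each statement's English description precedes it below -/
import Mathlib

section
/- Under a D_α-homothetic deformation with constant α > 0, the transformed quantities κ̄ = (κ + α² − 1)/α², μ̄ = (μ + 2(α−1))/α satisfy (1 − μ̄/2)/√(1−κ̄) = (1 − μ/2)/√(1−κ), provided κ < 1; i.e., the Boeckx invariant is preserved. -/
/-- The Boeckx invariant is preserved under `D_α`-homothetic deformations:
with `κ̄ = (κ + α² − 1)/α²` and `μ̄ = (μ + 2(α−1))/α`, one has
`(1 − μ̄/2)/√(1−κ̄) = (1 − μ/2)/√(1−κ)` whenever `κ < 1` and `α > 0`. -/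
theorem stmt_3 (κ μ α : ℝ) (hκ : κ < 1) (hα : 0 < α) :
    (1 - ((μ + 2 * (α - 1)) / α) / 2) / Real.sqrt (1 - (κ + α ^ 2 - 1) / α ^ 2) =
      (1 - μ / 2) / Real.sqrt (1 - κ) := by
  have hα0 : α ≠ 0 := ne_of_gt hα
  have h1 : 1 - (κ + α ^ 2 - 1) / α ^ 2 = (1 - κ) / α ^ 2 := by
    field_simp; ring
  rw [h1, Real.sqrt_div' _ (by positivity), Real.sqrt_sq hα.le]
  have hs : Real.sqrt (1 - κ) ≠ 0 := ne_of_gt (Real.sqrt_pos.mpr (by linarith))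
  field_simp
  ring
end

section
/- Consider on M = ℝ³ the vector fields ξ = ∂/∂x, X = ∂/∂y, Y = a∂/∂x + b∂/∂y + ∂/∂z, where a(x,y,z) = 2y + f(z) and b(x,y,z) = −(y/2)(yυ + υf(z) + r'(z)/r(z)) + (2/υ)r(z)e^{υx} + s(z), with r(z) > 0, υ ≠ 0 constant, and f, r, s smooth. Then the Lie brackets satisfy [ξ, X] = 0, [ξ, Y] = 2λ(x,z)·X, and [X, Y] = −([(2y+f(z))υr(z) + r'(z)]e^{υx}/(2λ(x,z)))·X + 2ξ, where λ(x,z) = r(z)e^{υx}. -/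
noncomputable section

/-- coordinate projections on `ℝ³` as continuous linear maps -/
def projX : (ℝ × ℝ × ℝ) →L[ℝ] ℝ := ContinuousLinearMap.fst ℝ ℝ (ℝ × ℝ)
def projY : (ℝ × ℝ × ℝ) →L[ℝ] ℝ :=
  (ContinuousLinearMap.fst ℝ ℝ ℝ).comp (ContinuousLinearMap.snd ℝ ℝ (ℝ × ℝ))
def projZ : (ℝ × ℝ × ℝ) →L[ℝ] ℝ :=
  (ContinuousLinearMap.snd ℝ ℝ ℝ).comp (ContinuousLinearMap.snd ℝ ℝ (ℝ × ℝ))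

/-- explicit total derivative of the second component of `Y` at `p` -/
def L2 (υ : ℝ) (f r s : ℝ → ℝ) (p : ℝ × ℝ × ℝ) : (ℝ × ℝ × ℝ) →L[ℝ] ℝ :=
  (-(p.2.1 / 2)) •
      ((υ : ℝ) • projY + (υ * deriv f p.2.2) • projZ +
        ((deriv (deriv r) p.2.2 * r p.2.2 - deriv r p.2.2 * deriv r p.2.2) / (r p.2.2) ^ 2) • projZ) +
    (p.2.1 * υ + υ * f p.2.2 + deriv r p.2.2 / r p.2.2) • (-((1 / (2 : ℝ)) • projY)) +
    ((2 / υ * r p.2.2) • ((Real.exp (υ * p.1) * υ) • projX) +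
      Real.exp (υ * p.1) • ((2 / υ * deriv r p.2.2) • projZ)) +
    (deriv s p.2.2) • projZ

/-- explicit total derivative of the field `Y` at `p` -/
def LY (υ : ℝ) (f r s : ℝ → ℝ) (p : ℝ × ℝ × ℝ) : (ℝ × ℝ × ℝ) →L[ℝ] (ℝ × ℝ × ℝ) :=
  ((2 : ℝ) • projY + (deriv f p.2.2) • projZ).prod
    ((L2 υ f r s p).prod (0 : (ℝ × ℝ × ℝ) →L[ℝ] ℝ))

end

/-- The Lie bracket of vector fields on `ℝ³` (viewed as maps `ℝ³ → ℝ³`). -/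
noncomputable def lieB (V W : ℝ × ℝ × ℝ → ℝ × ℝ × ℝ) (p : ℝ × ℝ × ℝ) : ℝ × ℝ × ℝ :=
  fderiv ℝ W p (V p) - fderiv ℝ V p (W p)

set_option maxHeartbeats 1000000 in
/-- Bracket relations for the frame `ξ = ∂x`, `X = ∂y`,
`Y = a∂x + b∂y + ∂z` with `a = 2y + f(z)`,
`b = −(y/2)(yυ + υf(z) + r'(z)/r(z)) + (2/υ) r(z) e^{υx} + s(z)`:
`[ξ,X] = 0`, `[ξ,Y] = 2λ X`, `[X,Y] = −([(2y+f)υr + r'] e^{υx}/(2λ)) X + 2ξ`,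
where `λ(x,z) = r(z) e^{υx}`. -/
theorem stmt_10 (υ : ℝ) (hυ : υ ≠ 0) (f r s : ℝ → ℝ)
    (hf : ContDiff ℝ (⊤ : ℕ∞) f) (hr : ContDiff ℝ (⊤ : ℕ∞) r) (hs : ContDiff ℝ (⊤ : ℕ∞) s)
    (hrpos : ∀ z, 0 < r z)
    (ξ X Y : ℝ × ℝ × ℝ → ℝ × ℝ × ℝ)
    (hξ : ξ = fun _ => (1, 0, 0))
    (hX : X = fun _ => (0, 1, 0))
    (hY : Y = fun p => (2 * p.2.1 + f p.2.2,
      -(p.2.1 / 2) * (p.2.1 * υ + υ * f p.2.2 + deriv r p.2.2 / r p.2.2) +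
        (2 / υ) * r p.2.2 * Real.exp (υ * p.1) + s p.2.2, 1)) :
    (∀ p, lieB ξ X p = 0) ∧
    (∀ p, lieB ξ Y p = (2 * (r p.2.2 * Real.exp (υ * p.1))) • X p) ∧
    (∀ p, lieB X Y p =
      (-(((2 * p.2.1 + f p.2.2) * υ * r p.2.2 + deriv r p.2.2) * Real.exp (υ * p.1) /
        (2 * (r p.2.2 * Real.exp (υ * p.1))))) • X p + (2 : ℝ) • ξ p) := by
  have hξd : ∀ p, fderiv ℝ ξ p = 0 := by
    intro p; rw [hξ]; exact fderiv_const_apply _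
  have hXd : ∀ p, fderiv ℝ X p = 0 := by
    intro p; rw [hX]; exact fderiv_const_apply _
  have hr2 : ContDiff ℝ (↑(⊤:ℕ∞)) r := hr.of_le (by simp)
  have hr' : ContDiff ℝ (↑(⊤:ℕ∞)) (deriv r) := (contDiff_infty_iff_deriv.mp hr2).2
  have key : ∀ p : ℝ × ℝ × ℝ, HasFDerivAt Y (LY υ f r s p) p := by
    intro p
    have hx : HasFDerivAt (fun q : ℝ × ℝ × ℝ => q.1) projX p := hasFDerivAt_fst
    have hy : HasFDerivAt (fun q : ℝ × ℝ × ℝ => q.2.1) projY p :=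
      hasFDerivAt_fst.comp p hasFDerivAt_snd
    have hz : HasFDerivAt (fun q : ℝ × ℝ × ℝ => q.2.2) projZ p :=
      hasFDerivAt_snd.comp p hasFDerivAt_snd
    have hfz : HasFDerivAt (fun q : ℝ × ℝ × ℝ => f q.2.2) ((deriv f p.2.2) • projZ) p :=
      ((hf.differentiable (by simp)).differentiableAt.hasDerivAt).comp_hasFDerivAt p hz
    have hsz : HasFDerivAt (fun q : ℝ × ℝ × ℝ => s q.2.2) ((deriv s p.2.2) • projZ) p :=
      ((hs.differentiable (by simp)).differentiableAt.hasDerivAt).comp_hasFDerivAt p hz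
    have hrz : HasFDerivAt (fun q : ℝ × ℝ × ℝ => r q.2.2) ((deriv r p.2.2) • projZ) p :=
      ((hr.differentiable (by simp)).differentiableAt.hasDerivAt).comp_hasFDerivAt p hz
    have hdiv : HasFDerivAt (fun q : ℝ × ℝ × ℝ => deriv r q.2.2 / r q.2.2)
        (((deriv (deriv r) p.2.2 * r p.2.2 - deriv r p.2.2 * deriv r p.2.2) / (r p.2.2) ^ 2) •
          projZ) p := by
      have hg : HasDerivAt (fun z : ℝ => deriv r z / r z)
          ((deriv (deriv r) p.2.2 * r p.2.2 - deriv r p.2.2 * deriv r p.2.2) / (r p.2.2) ^ 2)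
          p.2.2 := by
        exact HasDerivAt.div
          ((hr'.differentiable (by simp)).differentiableAt.hasDerivAt)
          ((hr.differentiable (by simp)).differentiableAt.hasDerivAt)
          (ne_of_gt (hrpos p.2.2))
      exact hg.comp_hasFDerivAt p hz
    have hexp : HasFDerivAt (fun q : ℝ × ℝ × ℝ => Real.exp (υ * q.1))
        ((Real.exp (υ * p.1) * υ) • projX) p := by
      have h1 : HasDerivAt (fun t : ℝ => Real.exp (υ * t)) (Real.exp (υ * p.1) * υ) p.1 := by
        simpa using (((hasDerivAt_id p.1).const_mul υ).exp)
      exact h1.comp_hasFDerivAt p hx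
    have hA1 : HasFDerivAt (fun q : ℝ × ℝ × ℝ => 2 * q.2.1 + f q.2.2)
        ((2 : ℝ) • projY + (deriv f p.2.2) • projZ) p :=
      (hy.const_mul 2).add hfz
    have ht1 : HasFDerivAt (fun q : ℝ × ℝ × ℝ => -(q.2.1 / 2))
        (-((1 / (2 : ℝ)) • projY)) p := by
      have h0 : HasFDerivAt (fun q : ℝ × ℝ × ℝ => (1 / (2 : ℝ)) * q.2.1)
          ((1 / (2 : ℝ)) • projY) p := hy.const_mul _
      have h2 := h0.neg
      refine h2.congr_of_eventuallyEq (Filter.Eventually.of_forall fun q => ?_)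
      show -(q.2.1 / 2) = -((1 / (2 : ℝ)) * q.2.1)
      ring
    have ht2 : HasFDerivAt
        (fun q : ℝ × ℝ × ℝ => q.2.1 * υ + υ * f q.2.2 + deriv r q.2.2 / r q.2.2)
        ((υ : ℝ) • projY + (υ * deriv f p.2.2) • projZ +
          ((deriv (deriv r) p.2.2 * r p.2.2 - deriv r p.2.2 * deriv r p.2.2) / (r p.2.2) ^ 2) •
            projZ) p := by
      refine HasFDerivAt.add (HasFDerivAt.add ?_ ?_) hdiv
      · exact hy.mul_const υ
      · simpa [smul_smul] using hfz.const_mul υ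
    have hb1 := ht1.mul ht2
    have hb2 : HasFDerivAt (fun q : ℝ × ℝ × ℝ => 2 / υ * r q.2.2 * Real.exp (υ * q.1))
        ((2 / υ * r p.2.2) • ((Real.exp (υ * p.1) * υ) • projX) +
          Real.exp (υ * p.1) • ((2 / υ * deriv r p.2.2) • projZ)) p := by
      have hc : HasFDerivAt (fun q : ℝ × ℝ × ℝ => 2 / υ * r q.2.2)
          ((2 / υ * deriv r p.2.2) • projZ) p := by
        simpa [smul_smul] using hrz.const_mul (2 / υ)
      exact hc.mul hexp
    have hA2 : HasFDerivAt (fun q : ℝ × ℝ × ℝ =>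
        -(q.2.1 / 2) * (q.2.1 * υ + υ * f q.2.2 + deriv r q.2.2 / r q.2.2) +
          2 / υ * r q.2.2 * Real.exp (υ * q.1) + s q.2.2) (L2 υ f r s p) p := by
      have h := (hb1.add hb2).add hsz
      exact h
    have hA3 : HasFDerivAt (fun _ : ℝ × ℝ × ℝ => (1 : ℝ))
        (0 : (ℝ × ℝ × ℝ) →L[ℝ] ℝ) p := hasFDerivAt_const _ _
    rw [hY]
    exact hA1.prodMk (hA2.prodMk hA3)
  refine ⟨?_, ?_, ?_⟩
  · intro p
    simp [lieB, hXd, hξd]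
  · intro p
    have hY' := (key p).fderiv
    simp only [lieB, hY', hξd, hξ, hX]
    ext <;>
      simp [LY, L2, projX, projY, projZ, Prod.smul_def, smul_eq_mul] <;>
      field_simp <;> ring
  · intro p
    have hY' := (key p).fderiv
    simp only [lieB, hY', hXd, hξ, hX]
    have hex : Real.exp (υ * p.1) ≠ 0 := Real.exp_ne_zero (υ * p.1)
    have hrne : r p.2.2 ≠ 0 := ne_of_gt (hrpos p.2.2)
    ext <;>
      simp [LY, L2, projX, projY, projZ, Prod.smul_def, smul_eq_mul] <;>
      field_simp <;> ring
end

section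
/- Suppose λ > 0, μ = 2, and a vector field ξ with ξ(λ) = υλ for constant υ ≠ 0, together with smooth functions satisfying X(λ) = φX(λ) = 0 and the bracket relation [X, φX] = 2ξ. Then applying [X,φX] to λ gives 0 = 2υλ, a contradiction; i.e., μ = 2 is impossible on a non-Sasakian (κ,μ,υ=const≠0)-contact metric manifold with ξ(I_M)=0. -/
/-- Impossibility of `μ = 2`: if `λ > 0`, `ξ(λ) = υλ` with constant `υ ≠ 0`,
`X(λ) = φX(λ) = 0`, and the bracket relation `[X,φX] = 2ξ` holds (acting on
functions), then applying `[X,φX]` to `λ` yields `0 = 2υλ`, a contradiction. -/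
theorem stmt_17 (M : Type*) [Nonempty M] (υ : ℝ) (hυ : υ ≠ 0)
    (μ : ℝ) (hμ : μ = 2)
    (Xop φXop ξop : (M → ℝ) → (M → ℝ))
    (hX0 : Xop 0 = 0) (hφX0 : φXop 0 = 0)
    (lam : M → ℝ) (hpos : ∀ p, 0 < lam p)
    (hξlam : ξop lam = fun p => υ * lam p)
    (hXlam : Xop lam = 0) (hφXlam : φXop lam = 0)
    (hbracket : ∀ g : M → ℝ, Xop (φXop g) - φXop (Xop g) = fun p => 2 * ξop g p) :
    False := by
  obtain ⟨p⟩ := ‹Nonempty M›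
  have h := congrFun (hbracket lam) p
  rw [hφXlam, hXlam, hX0, hφX0, hξlam] at h
  simp at h
  rcases h with h | h
  · exact hυ h
  · exact (hpos p).ne' h
end
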